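/- arXiv:2409.07156 — 6 statements merged into one kernel-verified Lean document; each statement's English description precedes it below -/
import Mathlib

section
/- Let S be an infinite set with DC_S. Define μ_S to consist of all A ⊆ [S]^ω such that Player II has a winning quasi-strategy in the club game on S with payoff A (players alternate playing elements of S for ω rounds, and Player II wins iff the set of all elements played belongs to A). Then μ_S is a filter on [S]^ω. -/
open Set

universe u

/-- The collection `[S]^ω` of countable subsets of `S`. -/
abbrev Cw (S : Type u) := {σ : Set S // σ.Countable}

/-- Dependent choice for the set `S`. -/
def DCax (S : Type u) : Prop :=
  ∀ R : S → S → Prop, (∀ x, ∃ y, R x y) →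
    ∀ x : S, ∃ f : ℕ → S, f 0 = x ∧ ∀ n, R (f n) (f (n + 1))

/-- `F` is a filter on `[S]^ω`: contains everything, upward closed, closed under
binary intersections. -/
def IsSetFilter (S : Type u) (F : Set (Set (Cw S))) : Prop :=
  Set.univ ∈ F ∧ (∀ A B : Set (Cw S), A ∈ F → A ⊆ B → B ∈ F) ∧
    (∀ A B : Set (Cw S), A ∈ F → B ∈ F → A ∩ B ∈ F)

/-- `F` is fine. -/
def IsFine (S : Type u) (F : Set (Set (Cw S))) : Prop :=
  ∀ τ : Cw S, {σ : Cw S | τ.1 ⊆ σ.1} ∈ F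

/-- `F` has the diagonal intersection property. -/
def HasDiagInter (S : Type u) (F : Set (Set (Cw S))) : Prop :=
  ∀ B : S → Set (Cw S), (∀ a : S, B a ∈ F) →
    {σ : Cw S | ∀ a ∈ σ.1, σ ∈ B a} ∈ F

/-- `F` is normal: every regressive-like assignment on an `F`-positive set is
constant-containing on an `F`-positive set. -/
def IsNormalFilter (S : Type u) (F : Set (Set (Cw S))) : Prop :=
  ∀ A : Set (Cw S), Aᶜ ∉ F →
    ∀ G : Cw S → Cw S, (∀ σ ∈ A, (G σ).1.Nonempty ∧ (G σ).1 ⊆ σ.1) →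
      ∃ a : S, {σ : Cw S | σ ∈ A ∧ a ∈ (G σ).1}ᶜ ∉ F

/-- A supercompactness measure on `[S]^ω`: a (proper) normal fine ultrafilter. -/
def IsSCMeasure (S : Type u) (F : Set (Set (Cw S))) : Prop :=
  IsSetFilter S F ∧ ∅ ∉ F ∧ IsFine S F ∧ HasDiagInter S F ∧
    ∀ A : Set (Cw S), A ∈ F ∨ Aᶜ ∈ F

/-- A quasi-strategy for Player II (who moves at odd-length-so-far positions,
i.e. positions of odd length are II's turn... here: II moves when the current
position has odd length). -/
def IsQStratII (S : Type u) (T : Set (List S)) : Prop :=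
  [] ∈ T ∧ (∀ p ∈ T, Even p.length → ∀ a : S, p ++ [a] ∈ T) ∧
    (∀ p ∈ T, ¬ Even p.length → ∃ b : S, p ++ [b] ∈ T)

/-- A quasi-strategy for Player I. -/
def IsQStratI (S : Type u) (T : Set (List S)) : Prop :=
  [] ∈ T ∧ (∀ p ∈ T, ¬ Even p.length → ∀ b : S, p ++ [b] ∈ T) ∧
    (∀ p ∈ T, Even p.length → ∃ a : S, p ++ [a] ∈ T)

/-- The infinite play `f` is consistent with the tree `T`. -/
def PlayThrough (S : Type u) (T : Set (List S)) (f : ℕ → S) : Prop :=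
  ∀ n : ℕ, (List.ofFn fun i : Fin n => f i) ∈ T

/-- The countable set of all elements played in the play `f`. -/
def playSet (S : Type u) (f : ℕ → S) : Cw S :=
  ⟨Set.range f, Set.countable_range f⟩

/-- `T` is a winning quasi-strategy for Player II in the club game on `S` with payoff `A`. -/
def WinsClubII (S : Type u) (T : Set (List S)) (A : Set (Cw S)) : Prop :=
  IsQStratII S T ∧ ∀ f : ℕ → S, PlayThrough S T f → playSet S f ∈ A

/-- `T` is a winning quasi-strategy for Player I in the club game on `S` with payoff `A`
(for Player II). -/
def WinsClubI (S : Type u) (T : Set (List S)) (A : Set (Cw S)) : Prop :=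
  IsQStratI S T ∧ ∀ f : ℕ → S, PlayThrough S T f → playSet S f ∉ A

/-- The quasi-club filter `μ_S`. -/
def qclub (S : Type u) : Set (Set (Cw S)) :=
  {A | ∃ T : Set (List S), WinsClubII S T A}

/-- Winning quasi-strategy for Player II in the length-ω game on `S` with payoff `A ⊆ S^ω`. -/
def WinsGameQSII (S : Type u) (T : Set (List S)) (A : Set (ℕ → S)) : Prop :=
  IsQStratII S T ∧ ∀ f : ℕ → S, PlayThrough S T f → f ∈ A

/-- Winning quasi-strategy for Player I in the length-ω game on `S` with payoff `A ⊆ S^ω`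
(for Player II). -/
def WinsGameQSI (S : Type u) (T : Set (List S)) (A : Set (ℕ → S)) : Prop :=
  IsQStratI S T ∧ ∀ f : ℕ → S, PlayThrough S T f → f ∉ A

/-- The play `f` follows the strategy `s` for Player I (who moves at even rounds). -/
def StratFollowsI (S : Type u) (s : List S → S) (f : ℕ → S) : Prop :=
  ∀ n : ℕ, Even n → f n = s (List.ofFn fun i : Fin n => f i)

/-- The play `f` follows the strategy `s` for Player II (who moves at odd rounds). -/
def StratFollowsII (S : Type u) (s : List S → S) (f : ℕ → S) : Prop :=
  ∀ n : ℕ, ¬ Even n → f n = s (List.ofFn fun i : Fin n => f i)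

/-- `AD_ℝ`: every length-ω two-player game with moves from `ℝ` is determined. -/
def ADReal : Prop :=
  ∀ A : Set (ℕ → ℝ),
    (∃ s : List ℝ → ℝ, ∀ f : ℕ → ℝ, StratFollowsI ℝ s f → f ∉ A) ∨
    (∃ s : List ℝ → ℝ, ∀ f : ℕ → ℝ, StratFollowsII ℝ s f → f ∈ A)


/-!
Over a nonempty `S` a winning quasi-strategy for II can be thinned to a strategy, and a
strategy generates a quasi-strategy, so `μ_S` consists of the payoffs II wins with a strategy.
Against any strategy there is a play, so `∅ ∉ μ_S`. For `A ∩ B`, II plays the games for `A` and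
`B` simultaneously: every move of the merged play is fed in turn to both simulated games as a
move of I, and II's moves at rounds `≡ 1` and `≡ 3 (mod 4)` are the answers of the two winning
strategies. Each simulated play then enumerates exactly the set of moves of the merged play.
-/

namespace ClubGame

variable {S : Type u}

theorem ofFn_apply_succ (f : ℕ → S) (n : ℕ) :
    (List.ofFn fun i : Fin (n + 1) => f i) = (List.ofFn fun i : Fin n => f i) ++ [f n] :=
  List.ofFn_succ_last

theorem take_ofFn_apply (f : ℕ → S) {k n : ℕ} (hk : k ≤ n) :
    (List.ofFn fun i : Fin n => f i).take k = List.ofFn fun i : Fin k => f i :=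
  List.ext_getElem (by simp [hk]) fun _ _ _ => by simp

def play (sI sII : List S → S) (n : ℕ) : S :=
  if Even n then sI (List.ofFn fun i : Fin n => play sI sII i)
  else sII (List.ofFn fun i : Fin n => play sI sII i)
termination_by n
decreasing_by all_goals exact i.isLt

theorem stratFollowsII_play (sI sII : List S → S) : StratFollowsII S sII (play sI sII) :=
  fun n hn => by rw [play, if_neg hn]

def strategyTree (s : List S → S) : Set (List S) :=
  {p | ∀ k (hk : k < p.length), ¬ Even k → p[k] = s (p.take k)}

theorem append_mem_strategyTree {s : List S → S} {p : List S} (hp : p ∈ strategyTree s)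
    {a : S} (ha : ¬ Even p.length → a = s p) : p ++ [a] ∈ strategyTree s := by
  intro k hk hodd
  rcases (Nat.lt_succ_iff.mp (by simpa using hk)).lt_or_eq with hlt | rfl
  · rw [List.getElem_append_left hlt, List.take_append_of_le_length hlt.le]
    exact hp k hlt hodd
  · rw [List.getElem_concat_length rfl, List.take_left]
    exact ha hodd

theorem isQStratII_strategyTree (s : List S → S) : IsQStratII S (strategyTree s) :=
  ⟨fun _ hk => absurd hk (Nat.not_lt_zero _),
    fun _ hp hev _ => append_mem_strategyTree hp (absurd hev),
    fun p hp _ => ⟨s p, append_mem_strategyTree hp fun _ => rfl⟩⟩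

theorem stratFollowsII_of_playThrough {s : List S → S} {f : ℕ → S}
    (hf : PlayThrough S (strategyTree s) f) : StratFollowsII S s f := by
  intro n hodd
  have hn : n < (List.ofFn fun i : Fin (n + 1) => f i).length := by simp
  have h := hf (n + 1) n hn hodd
  rwa [List.getElem_ofFn, take_ofFn_apply f n.le_succ] at h

theorem IsQStratII.exists_strategy [Inhabited S] {T : Set (List S)} (hT : IsQStratII S T) :
    ∃ s : List S → S, ∀ f, StratFollowsII S s f → PlayThrough S T f := by
  classical
  obtain ⟨hnil, hmoveI, hmoveII⟩ := hT
  refine ⟨fun p => if hp : p ∈ T ∧ ¬ Even p.length then (hmoveII p hp.1 hp.2).choose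
    else default, fun f hf n => ?_⟩
  induction n with
  | zero => exact hnil
  | succ n ih =>
    rw [ofFn_apply_succ]
    by_cases hn : Even n
    · exact hmoveI _ ih (by simpa using hn) (f n)
    · have hturn : (List.ofFn fun i : Fin n => f i) ∈ T ∧
          ¬ Even (List.ofFn fun i : Fin n => f i).length := ⟨ih, by simpa using hn⟩
      rw [hf n hn]
      dsimp only
      rw [dif_pos hturn]
      exact (hmoveII _ hturn.1 hturn.2).choose_spec

theorem mem_qclub_iff [Inhabited S] {A : Set (Cw S)} :
    A ∈ qclub S ↔ ∃ s : List S → S, ∀ f, StratFollowsII S s f → playSet S f ∈ A := by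
  constructor
  · rintro ⟨T, hT, hwin⟩
    obtain ⟨s, hs⟩ := IsQStratII.exists_strategy hT
    exact ⟨s, fun f hf => hwin f (hs f hf)⟩
  · rintro ⟨s, hs⟩
    exact ⟨strategyTree s, isQStratII_strategyTree s,
      fun f hf => hs f (stratFollowsII_of_playThrough hf)⟩

theorem playSet_comp {φ : ℕ → ℕ} (hφ : Function.Surjective φ) (f : ℕ → S) :
    playSet S (f ∘ φ) = playSet S f :=
  Subtype.ext (hφ.range_comp f)

section Merge

variable [Inhabited S]

/-- The first `n` moves of the play `k ↦ p[φ k]` (padded with `default` beyond `p`). -/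
def subposition (φ : ℕ → ℕ) (n : ℕ) (p : List S) : List S :=
  List.ofFn fun i : Fin n => p.getD (φ i) default

theorem subposition_ofFn {φ : ℕ → ℕ} {n m : ℕ} (h : ∀ i < n, φ i < m) (f : ℕ → S) :
    subposition φ n (List.ofFn fun i : Fin m => f i) = List.ofFn fun i : Fin n => f (φ i) := by
  simp only [subposition]
  congr 1
  funext i
  rw [List.getD_eq_getElem _ _ (by simpa using h i i.isLt), List.getElem_ofFn]

/-- Player I's moves in the `b`-th simulated game copy the whole merged play (`2k ↦ k`), and
its II-moves are the merged play's II-moves of residue `2 * b + 1` mod `4`. -/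
def mergeIndex (b : Bool) (n : ℕ) : ℕ :=
  if Even n then n / 2 else 4 * (n / 2) + 2 * b.toNat + 1

theorem mergeIndex_surjective (b : Bool) : Function.Surjective (mergeIndex b) :=
  fun m => ⟨2 * m, by simp [mergeIndex]⟩

theorem mergeIndex_of_odd (b : Bool) {n : ℕ} (hn : ¬ Even n) :
    mergeIndex b n = 4 * (n / 2) + 2 * b.toNat + 1 := by
  simp [mergeIndex, hn]

theorem mergeIndex_lt_of_odd (b : Bool) {i n : ℕ} (hn : ¬ Even n) (hi : i < n) :
    mergeIndex b i < mergeIndex b n := by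
  rw [mergeIndex_of_odd b hn, mergeIndex]
  rw [Nat.not_even_iff] at hn
  split_ifs with hi'
  · omega
  · rw [Nat.not_even_iff] at hi'
    omega

/-- At a position of length `4 * j + 2 * b + 1`, II answers as `t b` does in the simulated game
`b`, which is then at its position of length `2 * j + 1`. -/
def mergeStrategy (t : Bool → List S → S) (p : List S) : S :=
  let b := decide (p.length % 4 = 3)
  t b (subposition (mergeIndex b) (2 * (p.length / 4) + 1) p)

theorem stratFollowsII_comp_mergeIndex {t : Bool → List S → S} {f : ℕ → S}
    (hf : StratFollowsII S (mergeStrategy t) f) (b : Bool) :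
    StratFollowsII S (t b) (f ∘ mergeIndex b) := by
  intro n hn
  have hm := mergeIndex_of_odd b hn
  rw [Nat.not_even_iff] at hn
  have hb := b.toNat_le
  have hodd : ¬ Even (mergeIndex b n) := by rw [hm, Nat.not_even_iff]; omega
  have hgame : decide (mergeIndex b n % 4 = 3) = b := by cases b <;> simp [hm]; omega
  have hlen : 2 * (mergeIndex b n / 4) + 1 = n := by omega
  rw [Function.comp_apply, hf _ hodd, mergeStrategy]
  simp only [List.length_ofFn, hgame, hlen]
  rw [subposition_ofFn fun i hi => mergeIndex_lt_of_odd b (Nat.not_even_iff.mpr hn) hi]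
  rfl

end Merge

theorem univ_mem_qclub [Inhabited S] : Set.univ ∈ qclub S :=
  mem_qclub_iff.mpr ⟨fun _ => default, fun _ _ => trivial⟩

theorem mem_qclub_of_subset {A B : Set (Cw S)} (hA : A ∈ qclub S) (hAB : A ⊆ B) :
    B ∈ qclub S :=
  let ⟨T, hT, hwin⟩ := hA
  ⟨T, hT, fun f hf => hAB (hwin f hf)⟩

theorem inter_mem_qclub [Inhabited S] {A B : Set (Cw S)} (hA : A ∈ qclub S)
    (hB : B ∈ qclub S) : A ∩ B ∈ qclub S := by
  obtain ⟨sA, hsA⟩ := mem_qclub_iff.mp hA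
  obtain ⟨sB, hsB⟩ := mem_qclub_iff.mp hB
  refine mem_qclub_iff.mpr ⟨mergeStrategy fun b => bif b then sB else sA, fun f hf => ⟨?_, ?_⟩⟩
  · rw [← playSet_comp (mergeIndex_surjective false)]
    exact hsA _ (stratFollowsII_comp_mergeIndex hf false)
  · rw [← playSet_comp (mergeIndex_surjective true)]
    exact hsB _ (stratFollowsII_comp_mergeIndex hf true)

theorem empty_not_mem_qclub [Inhabited S] : ∅ ∉ qclub S := fun hempty =>
  let ⟨s, hs⟩ := mem_qclub_iff.mp hempty
  hs _ (stratFollowsII_play (fun _ => default) s)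

end ClubGame

theorem qclub_isFilter_general (S : Type u) [Infinite S] :
    IsSetFilter S (qclub S) ∧ ∅ ∉ qclub S := by
  inhabit S
  exact ⟨⟨ClubGame.univ_mem_qclub, fun _ _ => ClubGame.mem_qclub_of_subset,
    fun _ _ => ClubGame.inter_mem_qclub⟩, ClubGame.empty_not_mem_qclub⟩

/-- the quasi-club filter `μ_S` is a (proper) filter on `[S]^ω`. -/
theorem qclub_isFilter (S : Type u) [Infinite S] (hDC : DCax S) :
    IsSetFilter S (qclub S) ∧ ∅ ∉ qclub S :=
  qclub_isFilter_general S
end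

section
/- Let S be an infinite set with DC_S, and suppose μ is a supercompactness measure on [S]^ω, i.e., a normal, fine ultrafilter on [S]^ω. Then μ extends the quasi-club filter: μ_S ⊆ μ. -/
open Set

universe u

/-
Fineness and closure under diagonal intersections make `μ` countably complete, and iterating
diagonal intersections along finite sequences shows that `μ`-almost every `σ ∈ [S]^ω` is closed
under II's winning quasi-strategy: every position of the strategy with all moves in `σ` has an
answer in `σ`. For such a nonempty `σ`, let I enumerate `σ` while II answers inside `σ`; the
resulting play follows the strategy and its set of moves is exactly `σ`, so `σ` is in the payoff.
-/

def IsSetFilter.toFilter {S : Type u} {F : Set (Set (Cw S))} (hF : IsSetFilter S F) :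
    Filter (Cw S) where
  sets := F
  univ_sets := hF.1
  sets_of_superset := hF.2.1 _ _
  inter_sets := hF.2.2 _ _

namespace Cw

variable {S : Type u} {l : Filter (Cw S)}

theorem eventually_mem (hfine : IsFine S l.sets) (a : S) : ∀ᶠ σ in l, a ∈ σ.1 :=
  Filter.mem_of_superset (hfine ⟨{a}, countable_singleton a⟩) fun _ ↦ singleton_subset_iff.1

theorem eventually_forall_nat [Infinite S] (hfine : IsFine S l.sets) (hdiag : HasDiagInter S l.sets)
    {P : ℕ → Cw S → Prop} (h : ∀ n, ∀ᶠ σ in l, P n σ) : ∀ᶠ σ in l, ∀ n, P n σ := by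
  let c : ℕ ↪ S := Infinite.natEmbedding S
  have hc : ∀ a, ∀ᶠ σ in l, ∀ n, c n = a → P n σ := by
    intro a
    by_cases ha : ∃ n, c n = a
    · obtain ⟨n, rfl⟩ := ha
      filter_upwards [h n] with σ hσ m hm
      rwa [c.injective hm]
    · exact Filter.Eventually.of_forall fun σ n hn ↦ absurd ⟨n, hn⟩ ha
  filter_upwards [hdiag _ hc, hfine ⟨range c, countable_range c⟩] with σ hσ hrange n
  exact hσ (c n) (hrange ⟨n, rfl⟩) n rfl

theorem eventually_forall_list_of_length (hdiag : HasDiagInter S l.sets) (n : ℕ)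
    {P : List S → Cw S → Prop} (h : ∀ p, ∀ᶠ σ in l, P p σ) :
    ∀ᶠ σ in l, ∀ p : List S, p.length = n → (∀ x ∈ p, x ∈ σ.1) → P p σ := by
  induction n generalizing P with
  | zero =>
    filter_upwards [h []] with σ hσ p hp _
    rwa [List.length_eq_zero_iff.1 hp]
  | succ n ih =>
    filter_upwards [ih fun q ↦ hdiag _ fun a ↦ h (a :: q)] with σ hσ p hp hpσ
    obtain _ | ⟨a, q⟩ := p
    · simp at hp
    · exact hσ q (Nat.succ.inj hp) (fun x hx ↦ hpσ x (List.mem_cons_of_mem a hx)) a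
        (hpσ a List.mem_cons_self)

theorem eventually_forall_list [Infinite S] (hfine : IsFine S l.sets)
    (hdiag : HasDiagInter S l.sets) {P : List S → Cw S → Prop} (h : ∀ p, ∀ᶠ σ in l, P p σ) :
    ∀ᶠ σ in l, ∀ p : List S, (∀ x ∈ p, x ∈ σ.1) → P p σ := by
  filter_upwards [eventually_forall_nat hfine hdiag
    fun n ↦ eventually_forall_list_of_length hdiag n h] with σ hσ p
  exact hσ p.length p rfl

end Cw

section ClubGame

variable {S : Type u}

def IsClosedUnder (T : Set (List S)) (σ : Set S) : Prop :=
  ∀ p ∈ T, ¬ Even p.length → (∀ x ∈ p, x ∈ σ) → ∃ b ∈ σ, p ++ [b] ∈ T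

theorem eventually_isClosedUnder [Infinite S] {l : Filter (Cw S)} (hfine : IsFine S l.sets)
    (hdiag : HasDiagInter S l.sets) {T : Set (List S)} (hT : IsQStratII S T) :
    ∀ᶠ σ in l, IsClosedUnder T σ.1 := by
  have hanswer : ∀ p, ∀ᶠ σ in l, p ∈ T → ¬ Even p.length → ∃ b ∈ σ.1, p ++ [b] ∈ T := by
    intro p
    by_cases hp : p ∈ T ∧ ¬ Even p.length
    · obtain ⟨b, hb⟩ := hT.2.2 p hp.1 hp.2
      filter_upwards [Cw.eventually_mem hfine b] with σ hσ _ _ using ⟨b, hσ, hb⟩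
    · exact Filter.Eventually.of_forall fun σ h₁ h₂ ↦ absurd ⟨h₁, h₂⟩ hp
  filter_upwards [Cw.eventually_forall_list hfine hdiag hanswer] with σ hσ p hpT hodd hpσ
  exact hσ p hpσ hpT hodd

def positionOf (next : List S → S) : ℕ → List S
  | 0 => []
  | n + 1 => positionOf next n ++ [next (positionOf next n)]

def playOf (next : List S → S) (n : ℕ) : S :=
  next (positionOf next n)

theorem length_positionOf (next : List S → S) (n : ℕ) : (positionOf next n).length = n := by
  induction n with
  | zero => rfl
  | succ n ih => simp [positionOf, ih]

theorem positionOf_eq_ofFn (next : List S → S) (n : ℕ) :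
    positionOf next n = List.ofFn fun i : Fin n ↦ playOf next i := by
  induction n with
  | zero => rfl
  | succ n ih =>
    change positionOf next n ++ [playOf next n] = _
    rw [ih, List.ofFn_succ', List.concat_eq_append]
    rfl

theorem exists_playThrough_range_eq {T : Set (List S)} (hT : IsQStratII S T) {σ : Set S}
    (hne : σ.Nonempty) (hcount : σ.Countable) (hclosed : IsClosedUnder T σ) :
    ∃ f : ℕ → S, PlayThrough S T f ∧ range f = σ := by
  classical
  obtain ⟨e, rfl⟩ := hcount.exists_eq_range hne
  have : Nonempty S := ⟨e 0⟩
  choose! answer hanswer using hclosed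
  -- I plays `e k` at round `2 k`, so I alone already enumerates `range e`.
  let next : List S → S := fun p ↦ if Even p.length then e (p.length / 2) else answer p
  have hgood : ∀ n, positionOf next n ∈ T ∧ ∀ x ∈ positionOf next n, x ∈ range e := by
    intro n
    induction n with
    | zero => exact ⟨hT.1, by simp [positionOf]⟩
    | succ n ih =>
      obtain ⟨hT_n, hrange_n⟩ := ih
      have hmove : next (positionOf next n) ∈ range e ∧
          positionOf next n ++ [next (positionOf next n)] ∈ T := by
        by_cases hn : Even (positionOf next n).length
        · simpa [next, hn] using hT.2.1 _ hT_n hn _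
        · simpa [next, hn] using hanswer _ hT_n hn hrange_n
      refine ⟨hmove.2, fun x hx ↦ ?_⟩
      rcases List.mem_append.1 hx with hx | hx
      · exact hrange_n x hx
      · rw [List.mem_singleton.1 hx]; exact hmove.1
  refine ⟨playOf next, fun n ↦ positionOf_eq_ofFn next n ▸ (hgood n).1, ?_⟩
  refine (range_subset_iff.2 fun n ↦ (hgood (n + 1)).2 _ ?_).antisymm ?_
  · exact List.mem_append_right _ (List.mem_singleton_self _)
  · rintro _ ⟨k, rfl⟩
    refine ⟨2 * k, ?_⟩
    have hlen := length_positionOf next (2 * k)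
    simp [playOf, next, hlen]

end ClubGame

theorem scMeasure_extends_qclub_general (S : Type u) [Infinite S]
    (μ : Set (Set (Cw S))) (hμ : IsSCMeasure S μ) :
    qclub S ⊆ μ := by
  obtain ⟨hF, -, hfine, hdiag, -⟩ := hμ
  rintro A ⟨T, hT, hwin⟩
  obtain ⟨a⟩ := ‹Infinite S›.nonempty
  change ∀ᶠ σ in hF.toFilter, σ ∈ A
  filter_upwards [eventually_isClosedUnder hfine hdiag hT, Cw.eventually_mem hfine a]
    with σ hclosed ha
  obtain ⟨f, hf, hrange⟩ := exists_playThrough_range_eq hT ⟨a, ha⟩ σ.2 hclosed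
  simpa [playSet, hrange] using hwin f hf

/-- every supercompactness measure on `[S]^ω` extends the
quasi-club filter. -/
theorem scMeasure_extends_qclub (S : Type u) [Infinite S] (hDC : DCax S)
    (μ : Set (Set (Cw S))) (hμ : IsSCMeasure S μ) :
    qclub S ⊆ μ :=
  scMeasure_extends_qclub_general S μ hμ
end

section
/- Suppose AD_ℝ and DC_ℝ hold and ℝ surjects onto the set S. Then every two-player game of length ω with moves from S is quasi-determined: for every payoff set A ⊆ S^ω, one of the two players has a winning quasi-strategy. -/
open Set

universe u

namespace QuasiDetAux

variable {S : Type}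

-- The simulated real history: at rounds where `my` holds (our player's turns) we play the
-- real strategy `s`'s move; at opponent rounds we play `ρ` of the `S`-move recorded in `p`.
open scoped Classical in
noncomputable def liftF (ρ : S → ℝ) (s : List ℝ → ℝ) (my : ℕ → Prop) (d : S)
    (p : List S) : ℕ → List ℝ
  | 0 => []
  | n + 1 =>
    liftF ρ s my d p n ++
      [if my n then s (liftF ρ s my d p n) else ρ (p.getD n d)]

theorem liftF_congr {ρ : S → ℝ} {s : List ℝ → ℝ} {my : ℕ → Prop} {d : S} {p q : List S} :
    ∀ {n : ℕ}, (∀ i, i < n → p.getD i d = q.getD i d) →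
      liftF ρ s my d p n = liftF ρ s my d q n
  | 0, _ => rfl
  | n + 1, h => by
    have e := liftF_congr (ρ := ρ) (s := s) (my := my) (d := d) (p := p) (q := q) (n := n)
      fun i hi => h i (Nat.lt_succ_of_lt hi)
    simp only [liftF, e, h n (Nat.lt_succ_self n)]

theorem getD_append_lt {α : Type} (l : List α) (a d : α) {i : ℕ} (h : i < l.length) :
    (l ++ [a]).getD i d = l.getD i d := by
  rw [List.getD_eq_getElem?_getD, List.getD_eq_getElem?_getD,
    List.getElem?_append_left h]

theorem getD_append_len {α : Type} (l : List α) (a d : α) :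
    (l ++ [a]).getD l.length d = a := by
  rw [List.getD_eq_getElem?_getD]
  simp

theorem main_aux (π : ℝ → S) (ρ : S → ℝ) (hρ : ∀ b, π (ρ b) = b)
    (my : ℕ → Prop) (s : List ℝ → ℝ) :
    ∃ T : Set (List S),
      [] ∈ T ∧
      (∀ p ∈ T, my p.length → ∃ a, p ++ [a] ∈ T) ∧
      (∀ p ∈ T, ¬ my p.length → ∀ b, p ++ [b] ∈ T) ∧
      (∀ f : ℕ → S, PlayThrough S T f →
        ∃ g : ℕ → ℝ,
          (∀ n : ℕ, my n → g n = s (List.ofFn fun i : Fin n => g i)) ∧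
          ∀ n, π (g n) = f n) := by
  classical
  set d : S := π 0 with hd
  set T : Set (List S) :=
    {p | ∀ i, i < p.length → my i → p.getD i d = π (s (liftF ρ s my d p i))} with hT
  have hTmem : ∀ p : List S, p ∈ T ↔
      (∀ i, i < p.length → my i → p.getD i d = π (s (liftF ρ s my d p i))) := by
    intro p; rfl
  -- extending a position by one move
  have hext : ∀ p ∈ T, ∀ x : S,
      (my p.length → x = π (s (liftF ρ s my d p p.length))) → p ++ [x] ∈ T := by
    intro p hp x hx
    rw [hTmem] at hp ⊢
    intro i hi hmyi
    have hlen : (p ++ [x]).length = p.length + 1 := by simp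
    rw [hlen] at hi
    have hcong : liftF ρ s my d (p ++ [x]) i = liftF ρ s my d p i := by
      refine liftF_congr fun j hj => ?_
      have hj' : j < p.length := lt_of_lt_of_le hj (Nat.lt_succ_iff.mp hi)
      exact getD_append_lt p x d hj'
    rcases Nat.lt_or_ge i p.length with h | h
    · rw [getD_append_lt p x d h, hcong]
      exact hp i h hmyi
    · have hie : i = p.length := le_antisymm (Nat.lt_succ_iff.mp hi) h
      subst hie
      rw [getD_append_len p x d, hcong]
      exact hx hmyi
  refine ⟨T, ?_, ?_, ?_, ?_⟩
  · rw [hTmem]; intro i hi; simp at hi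
  · intro p hp hmy
    exact ⟨π (s (liftF ρ s my d p p.length)), hext p hp _ fun _ => rfl⟩
  · intro p hp hmy b
    exact hext p hp b fun h => absurd h hmy
  · intro f hf
    set P : ℕ → List S := fun n => List.ofFn fun i : Fin n => f i with hPdef
    have hPlen : ∀ n, (P n).length = n := by intro n; simp [hPdef]
    have hPget : ∀ n i, i < n → (P n).getD i d = f i := by
      intro n i hi
      rw [List.getD_eq_getElem?_getD]
      simp [hPdef, hi]
    set L : ℕ → List ℝ := fun n => liftF ρ s my d (P n) n with hLdef
    have hcong : ∀ n, liftF ρ s my d (P (n + 1)) n = L n := by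
      intro n
      refine liftF_congr fun i hi => ?_
      rw [hPget (n + 1) i (Nat.lt_succ_of_lt hi), hPget n i hi]
    set g : ℕ → ℝ := fun n => if my n then s (L n) else ρ (f n) with hgdef
    have hLstep : ∀ n, L (n + 1) = L n ++ [g n] := by
      intro n
      show liftF ρ s my d (P (n + 1)) (n + 1) = _
      simp only [liftF, hcong n, hPget (n + 1) n (Nat.lt_succ_self n), hgdef]
    have hLg : ∀ n, L n = List.ofFn fun i : Fin n => g i := by
      intro n
      induction n with
      | zero => rfl
      | succ n ih =>
        rw [hLstep n, ih, List.ofFn_succ', List.concat_eq_append]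
        congr 1
    have hfn : ∀ n, my n → f n = π (s (L n)) := by
      intro n hmy
      have hmem := (hTmem (P (n + 1))).mp (hf (n + 1))
      have := hmem n (by rw [hPlen]; exact Nat.lt_succ_self n) hmy
      rw [hPget (n + 1) n (Nat.lt_succ_self n), hcong n] at this
      exact this
    refine ⟨g, ?_, ?_⟩
    · intro n hmy
      rw [← hLg n]
      simp only [hgdef, if_pos hmy]
    · intro n
      by_cases hmy : my n
      · simp only [hgdef, if_pos hmy]
        exact (hfn n hmy).symm
      · simp only [hgdef, if_neg hmy]
        exact hρ (f n)

end QuasiDetAux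

/-- under `AD_ℝ + DC_ℝ`, every game on a surjective image `S` of `ℝ`
is quasi-determined. -/
theorem quasi_determinacy_of_surjective_image (S : Type) (hAD : ADReal) (hDC : DCax ℝ)
    (π : ℝ → S) (hπ : Function.Surjective π) :
    ∀ A : Set (ℕ → S),
      (∃ T : Set (List S), WinsGameQSI S T A) ∨ (∃ T : Set (List S), WinsGameQSII S T A) := by
  intro A
  classical
  obtain ⟨ρ, hρ⟩ : ∃ ρ : S → ℝ, ∀ b, π (ρ b) = b :=
    ⟨Function.surjInv hπ, fun b => Function.surjInv_eq hπ b⟩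
  set B : Set (ℕ → ℝ) := {g | (fun n => π (g n)) ∈ A} with hB
  rcases hAD B with ⟨s, hs⟩ | ⟨s, hs⟩
  · left
    obtain ⟨T, h0, hex, hall, hwin⟩ := QuasiDetAux.main_aux π ρ hρ Even s
    refine ⟨T, ⟨h0, fun p hp hodd b => hall p hp hodd b, fun p hp heven => hex p hp heven⟩, ?_⟩
    intro f hfp hfA
    obtain ⟨g, hfol, hproj⟩ := hwin f hfp
    have hgB : g ∉ B := hs g hfol
    apply hgB
    show (fun n => π (g n)) ∈ A
    have hfg : (fun n => π (g n)) = f := funext hproj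
    rwa [hfg]
  · right
    obtain ⟨T, h0, hex, hall, hwin⟩ :=
      QuasiDetAux.main_aux π ρ hρ (fun n => ¬ Even n) s
    refine ⟨T, ⟨h0, fun p hp heven a => hall p hp (not_not_intro heven) a,
      fun p hp hodd => hex p hp hodd⟩, ?_⟩
    intro f hfp
    obtain ⟨g, hfol, hproj⟩ := hwin f hfp
    have hgB : g ∈ B := hs g hfol
    have hfg : (fun n => π (g n)) = f := funext hproj
    rw [← hfg]
    exact hgB
end

section
/- Suppose AD_ℝ and DC_ℝ hold and ℝ surjects onto S. Then the quasi-club filter μ_S is an ultrafilter on [S]^ω: for every A ⊆ [S]^ω, either A ∈ μ_S or the complement of A is in μ_S. -/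
open Set

universe u

/-!
Let `π : ℝ → S` be onto and `σ` a section of it. `AD_ℝ` determines the game on `ℝ` whose
payoff is `{g | playSet S (π ∘ g) ∈ A}`. A winning strategy `s` for Player II there transfers
to the club game on `S`: Player II lifts Player I's moves by `σ`, answers them in the
simulated real game with `s`, and plays the images under `π`. A winning strategy `s` for
Player I is stolen: Player II runs a simulated real game in which `s` is Player I and the
lifted club moves are Player II's, and she plays the images of the moves of `s`. The set of
club moves is then the image of the set of simulated moves, which is all the payoff sees.
-/

section Simulation

variable {X : Type*}

/-- The position reached after `n` moves when move `n` is `rule (position) n`. -/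
def ruleHist (rule : List X → ℕ → X) : ℕ → List X
  | 0 => []
  | n + 1 => ruleHist rule n ++ [rule (ruleHist rule n) n]

def rulePlay (rule : List X → ℕ → X) (n : ℕ) : X := rule (ruleHist rule n) n

lemma ruleHist_eq_ofFn (rule : List X → ℕ → X) (n : ℕ) :
    ruleHist rule n = List.ofFn fun i : Fin n => rulePlay rule i := by
  induction n with
  | zero => rfl
  | succ n ih =>
    rw [List.ofFn_succ', List.concat_eq_append]
    simp only [Fin.val_castSucc, Fin.val_last, ← ih]
    rfl

lemma rulePlay_eq (rule : List X → ℕ → X) (n : ℕ) :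
    rulePlay rule n = rule (List.ofFn fun i : Fin n => rulePlay rule i) n := by
  rw [rulePlay, ruleHist_eq_ofFn]

lemma ruleHist_congr {rule rule' : List X → ℕ → X} {N : ℕ}
    (h : ∀ n < N, ∀ L, rule L n = rule' L n) : ruleHist rule N = ruleHist rule' N := by
  induction N with
  | zero => rfl
  | succ n ih =>
    have hn : ruleHist rule n = ruleHist rule' n := ih fun m hm => h m (hm.trans n.lt_succ_self)
    simp only [ruleHist, hn, h n n.lt_succ_self]

end Simulation

section CausalTree

variable {S : Type*}

def IsCausal (mv : (ℕ → S) → ℕ → S) : Prop :=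
  ∀ f f' : ℕ → S, ∀ k, (∀ i < k, f i = f' i) → mv f k = mv f' k

def causalTree (mv : (ℕ → S) → ℕ → S) : Set (List S) :=
  {p | ∀ k (hk : k < p.length), ¬ Even k →
    ∀ f : ℕ → S, (∀ i (hi : i < k), f i = p[i]) → p[k] = mv f k}

variable {mv : (ℕ → S) → ℕ → S}

lemma append_mem_causalTree_of_lt {p : List S} (hp : p ∈ causalTree mv) {b : S} {k : ℕ}
    (hk : k < p.length) (hodd : ¬ Even k) (f : ℕ → S)
    (hf : ∀ i (hi : i < k), f i = (p ++ [b])[i]'(by simp; omega)) :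
    (p ++ [b])[k]'(by simp; omega) = mv f k := by
  rw [List.getElem_append_left hk]
  exact hp k hk hodd f fun i hi => by rw [hf i hi, List.getElem_append_left]

lemma isQStratII_causalTree (hmv : IsCausal mv) : IsQStratII S (causalTree mv) := by
  refine ⟨fun k hk => absurd hk (by simp), ?_, ?_⟩
  · intro p hp hev a k hk hodd f hf
    have hlt : k < p.length := by
      rcases Nat.lt_succ_iff_lt_or_eq.1 (by simpa using hk) with h | rfl
      exacts [h, absurd hev hodd]
    exact append_mem_causalTree_of_lt hp hlt hodd f hf
  · intro p hp hodd
    obtain ⟨f₀, hf₀⟩ : ∃ f₀ : ℕ → S, ∀ i (hi : i < p.length), f₀ i = p[i] := by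
      obtain ⟨a, -⟩ := List.exists_mem_of_ne_nil p (by rintro rfl; simp at hodd)
      exact ⟨fun i => p.getD i a, fun i hi => by simp [hi]⟩
    refine ⟨mv f₀ p.length, fun k hk hodd f hf => ?_⟩
    rcases Nat.lt_succ_iff_lt_or_eq.1 (by simpa using hk) with hlt | rfl
    · exact append_mem_causalTree_of_lt hp hlt hodd f hf
    · simp only [List.getElem_append_right (le_refl _), Nat.sub_self, List.getElem_cons_zero]
      exact hmv _ _ _ fun i hi => by rw [hf₀ i hi, hf i hi, List.getElem_append_left]

lemma PlayThrough.eq_of_causalTree {f : ℕ → S} (hf : PlayThrough S (causalTree mv) f) {k : ℕ}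
    (hk : ¬ Even k) : f k = mv f k := by
  have hk' := hf (k + 1) k (by simp) hk f fun i hi => by rw [List.getElem_ofFn]
  rwa [List.getElem_ofFn] at hk'

lemma mem_qclub_of_causal {A : Set (Cw S)} (hmv : IsCausal mv)
    (hA : ∀ f : ℕ → S, (∀ k, ¬ Even k → f k = mv f k) → playSet S f ∈ A) : A ∈ qclub S :=
  ⟨causalTree mv, isQStratII_causalTree hmv, fun _ hf => hA _ fun _ hk => hf.eq_of_causalTree hk⟩

end CausalTree

section Transfer

variable {X S : Type*} {π : X → S} {A : Set (Cw S)} (hπ : Function.Surjective π)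
include hπ

lemma mem_qclub_of_stratFollowsII {s : List X → X}
    (hs : ∀ g, StratFollowsII X s g → playSet S (π ∘ g) ∈ A) : A ∈ qclub S := by
  let σ := Function.surjInv hπ
  let rule (f : ℕ → S) (L : List X) (n : ℕ) : X := if Even n then σ (f n) else s L
  refine mem_qclub_of_causal (mv := fun f k => π (s (ruleHist (rule f) k))) ?_ fun f hf => ?_
  · intro f f' k hff
    dsimp only
    rw [ruleHist_congr (rule' := rule f') fun n hn L => by simp only [rule, hff n hn]]
  · set h := rulePlay (rule f) with hh
    have hII : StratFollowsII X s h := fun n hn => by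
      rw [hh, rulePlay_eq]
      simp only [rule, if_neg hn]
    have hπh : π ∘ h = f := funext fun n => by
      by_cases hn : Even n
      · simp [h, rulePlay, rule, hn, σ, Function.surjInv_eq hπ]
      · simp [h, rulePlay, rule, hn, hf n hn]
    simpa [hπh] using hs h hII

lemma compl_mem_qclub_of_stratFollowsI {s : List X → X}
    (hs : ∀ g, StratFollowsI X s g → playSet S (π ∘ g) ∉ A) : Aᶜ ∈ qclub S := by
  let σ := Function.surjInv hπ
  -- simulated round `2m + 1` is the lift of the club move `f (2m)`, and Player II's club move
  -- `f (2m + 1)` is the image of simulated round `2m`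
  let rule (f : ℕ → S) (L : List X) (n : ℕ) : X := if Even n then s L else σ (f (n - 1))
  refine mem_qclub_of_causal (mv := fun f k => π (s (ruleHist (rule f) (k - 1)))) ?_
    fun f hf => ?_
  · intro f f' k hff
    dsimp only
    rw [ruleHist_congr (rule' := rule f') fun n hn L => by
      simp only [rule, hff (n - 1) (by omega)]]
  · set h := rulePlay (rule f) with hh
    have hI : StratFollowsI X s h := fun n hn => by
      rw [hh, rulePlay_eq]
      simp only [rule, if_pos hn]
    have hπh_even {n : ℕ} (hn : Even n) : π (h n) = f (n + 1) := by
      simp [h, rulePlay, rule, hn, hf (n + 1) (by simpa [Nat.even_add_one] using hn)]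
    have hπh_odd {n : ℕ} (hn : ¬ Even n) : π (h n) = f (n - 1) := by
      simp [h, rulePlay, rule, hn, σ, Function.surjInv_eq hπ]
    have hrange : range (π ∘ h) = range f := by
      refine (range_subset_iff.2 fun n => ?_).antisymm (range_subset_iff.2 fun m => ?_)
      · by_cases hn : Even n
        exacts [⟨n + 1, (hπh_even hn).symm⟩, ⟨n - 1, (hπh_odd hn).symm⟩]
      · by_cases hm : Even m
        · refine ⟨m + 1, ?_⟩
          rw [Function.comp_apply, hπh_odd (by simpa [Nat.even_add_one] using hm),
            Nat.add_sub_cancel]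
        · have hm0 : m ≠ 0 := by rintro rfl; simp at hm
          refine ⟨m - 1, ?_⟩
          rw [Function.comp_apply, hπh_even (by grind), Nat.sub_add_cancel (by omega)]
    have hplay : playSet S f = playSet S (π ∘ h) := Subtype.ext hrange.symm
    rw [mem_compl_iff, hplay]
    exact hs h hI

end Transfer

theorem qclub_ultrafilter_of_ADReal_general (S : Type) (hAD : ADReal)
    (π : ℝ → S) (hπ : Function.Surjective π) :
    ∀ A : Set (Cw S), A ∈ qclub S ∨ Aᶜ ∈ qclub S := by
  intro A
  rcases hAD {g | playSet S (π ∘ g) ∈ A} with ⟨s, hs⟩ | ⟨s, hs⟩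
  · exact Or.inr (compl_mem_qclub_of_stratFollowsI hπ hs)
  · exact Or.inl (mem_qclub_of_stratFollowsII hπ hs)

/-- under `AD_ℝ + DC_ℝ`, the quasi-club filter on a surjective image
of `ℝ` is an ultrafilter. -/
theorem qclub_ultrafilter_of_ADReal (S : Type) (hAD : ADReal) (hDC : DCax ℝ)
    (π : ℝ → S) (hπ : Function.Surjective π) :
    ∀ A : Set (Cw S), A ∈ qclub S ∨ Aᶜ ∈ qclub S :=
  qclub_ultrafilter_of_ADReal_general S hAD π hπ
end

section
/- Let M be a transitive inner model of ZF, let S ∈ M, and suppose every ω-sequence of elements of S belongs to M (S^ω ⊆ M). Then the quasi-club filter as computed in M is contained in the true quasi-club filter: μ_S^M ⊆ μ_S. Consequently, if μ_S^M is an ultrafilter in M, then μ_S^M = μ_S ∩ M. -/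
open Set

universe u

namespace QAux

variable {S : Type u}

/-- Good position: even length, all prefixes in `T`. -/
def Good (T : Set (List S)) (p : List S) : Prop :=
  Even p.length ∧ ∀ k ≤ p.length, p.take k ∈ T

open Classical in
noncomputable def pick (T : Set (List S)) (s0 : S) (r : List S) : S :=
  if h : ∃ b, r ++ [b] ∈ T then Classical.choose h else s0

noncomputable def step (T : Set (List S)) (s0 : S) (p : List S) (x : S) : List S :=
  (p ++ [x]) ++ [pick T s0 (p ++ [x])]

lemma step_length (T : Set (List S)) (s0 : S) (p : List S) (x : S) :
    (step T s0 p x).length = p.length + 2 := by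
  simp [step]

lemma step_prefix (T : Set (List S)) (s0 : S) (p : List S) (x : S) :
    p <+: step T s0 p x := by
  exact (List.prefix_append p [x]).trans (List.prefix_append _ _)

lemma mem_step (T : Set (List S)) (s0 : S) (p : List S) (x : S) :
    x ∈ step T s0 p x := by
  simp [step]

lemma step_good (T : Set (List S)) (hT : IsQStratII S T) (s0 : S) {p : List S}
    (hp : Good T p) (x : S) : Good T (step T s0 p x) := by
  obtain ⟨heven, hpref⟩ := hp
  have hpT : p ∈ T := by simpa using hpref p.length le_rfl
  have h1 : p ++ [x] ∈ T := hT.2.1 p hpT heven x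
  have hodd : ¬ Even (p ++ [x]).length := by
    simp [List.length_append, Nat.even_add_one, heven]
  have h2 : ∃ b, (p ++ [x]) ++ [b] ∈ T := hT.2.2 _ h1 hodd
  have h3 : step T s0 p x ∈ T := by
    rw [step]; unfold pick; rw [dif_pos h2]; exact Classical.choose_spec h2
  refine ⟨by simp [step_length, Nat.even_add, heven], ?_⟩
  intro k hk
  rw [step_length] at hk
  rcases Nat.lt_or_ge k (p.length + 1) with h | h
  · rcases Nat.lt_or_ge k (p.length) with h' | h'
    · have : (step T s0 p x).take k = p.take k := by
        rw [step]
        rw [List.take_append_of_le_length (by simp; omega)]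
        rw [List.take_append_of_le_length (by omega)]
      rw [this]; exact hpref k (le_of_lt h')
    · have hk' : k = p.length := by omega
      subst hk'
      have : (step T s0 p x).take p.length = p := by
        rw [step, List.take_append_of_le_length (by simp)]
        simp
      rw [this]; exact hpT
  · rcases Nat.lt_or_ge k (p.length + 2) with h' | h'
    · have hk' : k = p.length + 1 := by omega
      subst hk'
      have : (step T s0 p x).take (p.length + 1) = p ++ [x] := by
        rw [step, List.take_append_of_le_length (by simp)]
        simp
      rw [this]; exact h1
    · have hk' : k = p.length + 2 := by omega
      subst hk'
      have : (step T s0 p x).take (p.length + 2) = step T s0 p x := by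
        apply List.take_of_length_le; simp [step_length]
      rw [this]; exact h3

noncomputable def feed (T : Set (List S)) (s0 : S) (p : List S) (l : List S) : List S :=
  l.foldl (step T s0) p

@[simp] lemma feed_nil (T : Set (List S)) (s0 : S) (p : List S) : feed T s0 p [] = p := rfl

lemma feed_cons (T : Set (List S)) (s0 : S) (p : List S) (x : S) (l : List S) :
    feed T s0 p (x :: l) = feed T s0 (step T s0 p x) l := rfl

lemma feed_good (T : Set (List S)) (hT : IsQStratII S T) (s0 : S) (l : List S) :
    ∀ {p : List S}, Good T p → Good T (feed T s0 p l) := by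
  induction l with
  | nil => intro p hp; exact hp
  | cons x l ih => intro p hp; rw [feed_cons]; exact ih (step_good T hT s0 hp x)

lemma feed_prefix (T : Set (List S)) (s0 : S) (l : List S) :
    ∀ p : List S, p <+: feed T s0 p l := by
  induction l with
  | nil => intro p; exact List.prefix_rfl
  | cons x l ih =>
      intro p
      rw [feed_cons]
      exact (step_prefix T s0 p x).trans (ih _)

lemma feed_length (T : Set (List S)) (s0 : S) (l : List S) :
    ∀ p : List S, (feed T s0 p l).length = p.length + 2 * l.length := by
  induction l with
  | nil => intro p; simp
  | cons x l ih =>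
      intro p
      rw [feed_cons, ih, step_length]
      simp [List.length_cons]; ring

lemma mem_feed (T : Set (List S)) (s0 : S) (l : List S) :
    ∀ p : List S, ∀ x ∈ l, x ∈ feed T s0 p l := by
  induction l with
  | nil => intro p x hx; simp at hx
  | cons y l ih =>
      intro p x hx
      rcases List.mem_cons.mp hx with h | h
      · subst h
        rw [feed_cons]
        exact (feed_prefix T s0 l _).subset (mem_step T s0 p x)
      · rw [feed_cons]; exact ih _ x h

end QAux

namespace QAux

variable {S : Type u}

section chain

variable (s0 : S) (c : ℕ → List S)

/-- Limit function of a prefix-chain of lists. -/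
noncomputable def limf (k : ℕ) : S := (c (k + 1)).getD k s0

variable (hmono : ∀ n m, n ≤ m → c n <+: c m) (hlen : ∀ n, n ≤ (c n).length)

include hmono hlen

lemma limf_eq {n k : ℕ} (hk : k < (c n).length) :
    (c n).getD k s0 = limf s0 c k := by
  have hk' : k < (c (k + 1)).length := lt_of_lt_of_le (Nat.lt_succ_self k) (hlen (k + 1))
  rcases le_total n (k + 1) with h | h
  · have hpre := hmono n (k + 1) h
    rw [limf, List.getD_eq_getElem _ _ hk, List.getD_eq_getElem _ _ hk']
    exact hpre.getElem hk
  · have hpre := hmono (k + 1) n h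
    rw [limf, List.getD_eq_getElem _ _ hk, List.getD_eq_getElem _ _ hk']
    exact (hpre.getElem hk').symm

lemma ofFn_limf (n : ℕ) :
    (List.ofFn fun i : Fin n => limf s0 c i) = (c n).take n := by
  apply List.ext_getElem
  · simp [Nat.min_eq_left (hlen n)]
  · intro i h1 h2
    simp only [List.getElem_ofFn, List.getElem_take]
    have hi : i < n := by simpa using h1
    have hi' : i < (c n).length := lt_of_lt_of_le hi (hlen n)
    rw [← limf_eq s0 c hmono hlen hi', List.getD_eq_getElem _ _ hi']

lemma range_limf : Set.range (limf s0 c) = {x | ∃ n, x ∈ c n} := by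
  ext x
  constructor
  · rintro ⟨k, rfl⟩
    refine ⟨k + 1, ?_⟩
    have hk' : k < (c (k + 1)).length := lt_of_lt_of_le (Nat.lt_succ_self k) (hlen (k + 1))
    rw [limf, List.getD_eq_getElem _ _ hk']
    exact List.getElem_mem _
  · rintro ⟨n, hx⟩
    obtain ⟨k, hk, rfl⟩ := List.getElem_of_mem hx
    exact ⟨k, by rw [← limf_eq s0 c hmono hlen hk, List.getD_eq_getElem _ _ hk]⟩

end chain

section interleave

variable (T1 T2 : Set (List S)) (s0 : S)

noncomputable def seq : ℕ → List S × List S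
  | 0 => ([], [])
  | n + 1 =>
      let pq := seq n
      let p' := feed T1 s0 pq.1 (pq.2 ++ [s0])
      (p', feed T2 s0 pq.2 p')

noncomputable def P (n : ℕ) : List S := (seq T1 T2 s0 n).1
noncomputable def Q (n : ℕ) : List S := (seq T1 T2 s0 n).2

lemma P_zero : P T1 T2 s0 0 = [] := rfl
lemma Q_zero : Q T1 T2 s0 0 = [] := rfl

lemma P_succ (n : ℕ) :
    P T1 T2 s0 (n + 1) = feed T1 s0 (P T1 T2 s0 n) (Q T1 T2 s0 n ++ [s0]) := rfl

lemma Q_succ (n : ℕ) :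
    Q T1 T2 s0 (n + 1) = feed T2 s0 (Q T1 T2 s0 n) (P T1 T2 s0 (n + 1)) := rfl

lemma good_nil {T : Set (List S)} (hT : IsQStratII S T) : Good T ([] : List S) := by
  refine ⟨by simp, ?_⟩
  intro k hk
  simp at hk
  simp [hk, hT.1]

lemma seq_good (h1 : IsQStratII S T1) (h2 : IsQStratII S T2) (n : ℕ) : Good T1 (P T1 T2 s0 n) ∧ Good T2 (Q T1 T2 s0 n) := by
  induction n with
  | zero => exact ⟨good_nil h1, good_nil h2⟩
  | succ n ih =>
      refine ⟨?_, ?_⟩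
      · rw [P_succ]; exact feed_good T1 h1 s0 _ ih.1
      · rw [Q_succ]; exact feed_good T2 h2 s0 _ ih.2

lemma P_mono {n m : ℕ} (h : n ≤ m) : P T1 T2 s0 n <+: P T1 T2 s0 m := by
  induction m with
  | zero => simp_all
  | succ m ih =>
      rcases Nat.lt_or_ge n (m + 1) with h' | h'
      · exact (ih (by omega)).trans (by rw [P_succ]; exact feed_prefix T1 s0 _ _)
      · have : n = m + 1 := by omega
        subst this; exact List.prefix_rfl

lemma Q_mono {n m : ℕ} (h : n ≤ m) : Q T1 T2 s0 n <+: Q T1 T2 s0 m := by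
  induction m with
  | zero => simp_all
  | succ m ih =>
      rcases Nat.lt_or_ge n (m + 1) with h' | h'
      · exact (ih (by omega)).trans (by rw [Q_succ]; exact feed_prefix T2 s0 _ _)
      · have : n = m + 1 := by omega
        subst this; exact List.prefix_rfl

lemma P_len (n : ℕ) : n ≤ (P T1 T2 s0 n).length := by
  induction n with
  | zero => simp
  | succ n ih =>
      rw [P_succ, feed_length]
      simp only [List.length_append, List.length_cons]
      omega

lemma Q_len (n : ℕ) : n ≤ (Q T1 T2 s0 n).length := by
  induction n with
  | zero => simp
  | succ n ih =>
      rw [Q_succ, feed_length]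
      have := P_len T1 T2 s0 (n + 1)
      omega

lemma mem_Q_P {x : S} {n : ℕ} (hx : x ∈ Q T1 T2 s0 n) : x ∈ P T1 T2 s0 (n + 1) := by
  rw [P_succ]
  exact mem_feed T1 s0 _ _ x (by simp [hx])

lemma mem_P_Q {x : S} {n : ℕ} (hx : x ∈ P T1 T2 s0 (n + 1)) : x ∈ Q T1 T2 s0 (n + 1) := by
  rw [Q_succ]
  exact mem_feed T2 s0 _ _ x hx

end interleave

lemma not_both {S : Type u} [Nonempty S] (A : Set (Cw S))
    (hA : A ∈ qclub S) (hAc : Aᶜ ∈ qclub S) : False := by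
  obtain ⟨T1, hq1, hw1⟩ := hA
  obtain ⟨T2, hq2, hw2⟩ := hAc
  let s0 : S := Classical.arbitrary S
  have hgood := seq_good T1 T2 s0 hq1 hq2
  have hPmono : ∀ n m, n ≤ m → P T1 T2 s0 n <+: P T1 T2 s0 m :=
    fun n m h => P_mono T1 T2 s0 h
  have hQmono : ∀ n m, n ≤ m → Q T1 T2 s0 n <+: Q T1 T2 s0 m :=
    fun n m h => Q_mono T1 T2 s0 h
  have hPlen := P_len T1 T2 s0
  have hQlen := Q_len T1 T2 s0
  set f := limf s0 (P T1 T2 s0) with hf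
  set g := limf s0 (Q T1 T2 s0) with hg
  have hplayf : PlayThrough S T1 f := by
    intro n
    rw [hf, ofFn_limf s0 _ hPmono hPlen n]
    exact (hgood n).1.2 n (hPlen n)
  have hplayg : PlayThrough S T2 g := by
    intro n
    rw [hg, ofFn_limf s0 _ hQmono hQlen n]
    exact (hgood n).2.2 n (hQlen n)
  have hrange : Set.range f = Set.range g := by
    rw [hf, hg, range_limf s0 _ hPmono hPlen, range_limf s0 _ hQmono hQlen]
    ext x
    constructor
    · rintro ⟨n, hx⟩
      cases n with
      | zero => rw [P_zero] at hx; simp at hx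
      | succ m => exact ⟨m + 1, mem_P_Q T1 T2 s0 hx⟩
    · rintro ⟨n, hx⟩
      exact ⟨n + 1, mem_Q_P T1 T2 s0 hx⟩
  have hfg : playSet S f = playSet S g := Subtype.ext hrange
  have h1 := hw1 f hplayf
  have h2 := hw2 g hplayg
  rw [← hfg] at h2
  exact h2 h1

end QAux

/-- the quasi-club filter computed in an inner model `M` with
`S^ω ⊆ M` is contained in the true one; if it is an ultrafilter in `M`, the two
agree on sets of `M`. -/
theorem qclub_absoluteness (S : Type u) (hDC : DCax S)
    (MTree : Set (Set (List S))) (MSet : Set (Set (Cw S))) (MSeq : Set (ℕ → S))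
    (hMSeq : ∀ f : ℕ → S, f ∈ MSeq)
    (μM : Set (Set (Cw S)))
    (hμM : μM = {A | ∃ T ∈ MTree, IsQStratII S T ∧
      ∀ f ∈ MSeq, PlayThrough S T f → playSet S f ∈ A}) :
    μM ⊆ qclub S ∧
      ((∀ A ∈ MSet, Aᶜ ∈ MSet) → (∀ A ∈ MSet, A ∈ μM ∨ Aᶜ ∈ μM) →
        ∀ A ∈ MSet, (A ∈ μM ↔ A ∈ qclub S)) := by
  have part1 : μM ⊆ qclub S := by
    intro A hA
    rw [hμM] at hA
    obtain ⟨T, -, hqs, hw⟩ := hA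
    exact ⟨T, hqs, fun f hf => hw f (hMSeq f) hf⟩
  refine ⟨part1, ?_⟩
  intro _hcomp hultra A hAM
  constructor
  · exact fun h => part1 h
  · intro hAq
    rcases hultra A hAM with h | h
    · exact h
    · by_cases hS : Nonempty S
      · exact (QAux.not_both (S := S) A hAq (part1 h)).elim
      · rw [hμM] at h ⊢
        obtain ⟨T, hTM, hqs, -⟩ := h
        exact ⟨T, hTM, hqs, fun f _ _ => absurd (Nonempty.intro (f 0)) hS⟩
end

section
/- Let S be an infinite set with DC_S and suppose there exist two sets A, B ∈ μ_S, where μ_S is the quasi-club filter. Then A ∩ B ∈ μ_S; that is, μ_S is closed under finite intersections (and hence is a filter provided ∅ ∉ μ_S and [S]^ω ∈ μ_S). -/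
open Set

universe u

section QclubAux

attribute [local instance] Classical.propDecidable
set_option linter.unusedSectionVars false

variable {S : Type u} [Nonempty S]

/-- Default element. -/
noncomputable def qcDefault (S : Type u) [Nonempty S] : S := Classical.arbitrary S

/-- Pick a legal II move if one exists. -/
noncomputable def qcPick (T : Set (List S)) (q : List S) : S :=
  if h : ∃ b, q ++ [b] ∈ T then h.choose else qcDefault S

lemma qcPick_mem {T : Set (List S)} {q : List S} (h : ∃ b, q ++ [b] ∈ T) :
    q ++ [qcPick T q] ∈ T := by
  rw [qcPick, dif_pos h]; exact h.choose_spec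

/-- Simulated game position of length `2*j+1` extracted from a real position `p`,
with offset `c` for II's simulated responses. -/
noncomputable def qcSim (c : ℕ) (p : List S) (j : ℕ) : List S :=
  List.ofFn fun i : Fin (2 * j + 1) =>
    if Even i.1 then p.getD (i.1 / 2) (qcDefault S)
    else p.getD (4 * (i.1 / 2) + c) (qcDefault S)

/-- The interleaving strategy for II in the real game. -/
noncomputable def qcSigma (TA TB : Set (List S)) (p : List S) : S :=
  if p.length % 4 = 1 then qcPick TA (qcSim 1 p (p.length / 4))
  else qcPick TB (qcSim 3 p (p.length / 4))

/-- The tree of plays following `qcSigma`. -/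
def qcTree (TA TB : Set (List S)) : Set (List S) :=
  {p | ∀ k, 2 * k + 1 < p.length →
    p.getD (2 * k + 1) (qcDefault S) = qcSigma TA TB (p.take (2 * k + 1))}

lemma qcTree_isQStratII (TA TB : Set (List S)) : IsQStratII S (qcTree TA TB) := by
  refine ⟨?_, ?_, ?_⟩
  · intro k hk; simp at hk
  · intro p hp hev a k hk
    simp only [List.length_append, List.length_singleton] at hk
    have hklt : 2 * k + 1 < p.length := by
      rcases lt_or_eq_of_le (Nat.lt_succ_iff.mp hk) with h | h
      · exact h
      · exfalso; rcases hev with ⟨m, hm⟩; omega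
    rw [List.getD_append _ _ _ _ hklt, List.take_append_of_le_length (le_of_lt hklt)]
    exact hp k hklt
  · intro p hp hodd
    refine ⟨qcSigma TA TB p, ?_⟩
    intro k hk
    simp only [List.length_append, List.length_singleton] at hk
    rcases lt_or_eq_of_le (Nat.lt_succ_iff.mp hk) with h | h
    · rw [List.getD_append _ _ _ _ h, List.take_append_of_le_length (le_of_lt h)]
      exact hp k h
    · have htake : (p ++ [qcSigma TA TB p]).take (2 * k + 1) = p := by
        rw [List.take_append_of_le_length (le_of_eq h), h, List.take_length]
      rw [htake]
      have : (p ++ [qcSigma TA TB p]).getD (2 * k + 1) (qcDefault S)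
          = qcSigma TA TB p := by
        rw [h]
        simp [List.getD_eq_getElem?_getD]
      rw [this]

lemma qc_ofFn_getD {n : ℕ} (x : Fin n → S) (i : ℕ) (hi : i < n) (d : S) :
    (List.ofFn x).getD i d = x ⟨i, hi⟩ := by
  have h : i < (List.ofFn x).length := by simpa using hi
  rw [List.getD_eq_getElem _ _ h, List.getElem_ofFn]

lemma qc_take_ofFn {n m : ℕ} (hm : m ≤ n) (x : Fin n → S) :
    (List.ofFn x).take m = List.ofFn fun i : Fin m => x ⟨i.1, lt_of_lt_of_le i.2 hm⟩ := by
  apply List.ext_getElem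
  · simp [Nat.min_eq_left hm]
  · intro i h1 h2
    have hi : i < m := by simpa using h2
    rw [List.getElem_take, List.getElem_ofFn, List.getElem_ofFn]

/-- The simulated play extracted from the real play `f`. -/
noncomputable def qcG (c : ℕ) (f : ℕ → S) (n : ℕ) : S :=
  if Even n then f (n / 2) else f (4 * (n / 2) + c)

lemma qcSim_ofFn (c : ℕ) (hc : 1 ≤ c) (f : ℕ → S) (j : ℕ) :
    qcSim c (List.ofFn fun i : Fin (4 * j + c) => f i.1) j
      = List.ofFn fun i : Fin (2 * j + 1) => qcG c f i.1 := by
  unfold qcSim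
  apply List.ext_getElem
  · simp
  · intro i h1 h2
    have hi : i < 2 * j + 1 := by simpa using h2
    rw [List.getElem_ofFn, List.getElem_ofFn]
    rcases Nat.even_or_odd i with he | ho
    · have hlt : i / 2 < 4 * j + c := by omega
      simp [qcG, he, List.ofFnNthVal, hlt]
    · have hne : ¬ Even i := Nat.not_even_iff_odd.mpr ho
      have hlt : 4 * (i / 2) + c < 4 * j + c := by
        rcases ho with ⟨t, ht⟩; omega
      simp [qcG, hne, List.ofFnNthVal, hlt]

lemma qcG_plays {TA TB TC : Set (List S)} {A : Set (Cw S)} {c : ℕ}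
    (hTC : IsQStratII S TC) (hWin : ∀ g : ℕ → S, PlayThrough S TC g → playSet S g ∈ A)
    {f : ℕ → S} (hf : PlayThrough S (qcTree TA TB) f)
    (hsig : ∀ j : ℕ, f (4 * j + c)
      = qcPick TC (List.ofFn fun i : Fin (2 * j + 1) => qcG c f i.1))
    (hcodd : ¬ Even c) :
    playSet S f ∈ A := by
  have key : ∀ m, (List.ofFn fun i : Fin m => qcG c f i.1) ∈ TC := by
    intro m
    induction m with
    | zero => simpa using hTC.1
    | succ m ih =>
      have hsplit : (List.ofFn fun i : Fin (m + 1) => qcG c f i.1)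
          = (List.ofFn fun i : Fin m => qcG c f i.1) ++ [qcG c f m] := by
        rw [List.ofFn_succ']; simp [List.concat_eq_append]
      rw [hsplit]
      rcases Nat.even_or_odd m with he | ho
      · have hlen : Even (List.ofFn fun i : Fin m => qcG c f i.1).length := by
          simpa using he
        exact hTC.2.1 _ ih hlen _
      · obtain ⟨j, hj⟩ := ho
        have hm : m = 2 * j + 1 := hj
        have hmne : ¬ Even m := by
          rw [hm, Nat.even_add_one]; simp [Nat.even_mul]
        have hlast : qcG c f m = qcPick TC (List.ofFn fun i : Fin m => qcG c f i.1) := by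
          have h1 : qcG c f m = f (4 * j + c) := by
            simp only [qcG, if_neg hmne]
            congr 1
            omega
          rw [h1, hsig j, hm]
        rw [hlast]
        apply qcPick_mem
        have hodd : ¬ Even (List.ofFn fun i : Fin m => qcG c f i.1).length := by
          simpa using hmne
        exact hTC.2.2 _ ih hodd
  have hplay : PlayThrough S TC (qcG c f) := key
  have hmem := hWin _ hplay
  have hrange : playSet S (qcG c f) = playSet S f := by
    unfold playSet
    apply Subtype.ext
    apply Set.eq_of_subset_of_subset
    · rintro x ⟨n, rfl⟩
      by_cases hn : Even n
      · exact ⟨n / 2, by simp [qcG, hn]⟩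
      · exact ⟨4 * (n / 2) + c, by simp [qcG, hn]⟩
    · rintro x ⟨n, rfl⟩
      refine ⟨2 * n, ?_⟩
      have h2n : Even (2 * n) := even_two_mul n
      simp only [qcG, if_pos h2n]
      congr 1
      omega
  rw [hrange] at hmem
  exact hmem

lemma qcTree_wins {TA TB : Set (List S)} {A B : Set (Cw S)}
    (hA : WinsClubII S TA A) (hB : WinsClubII S TB B) :
    WinsClubII S (qcTree TA TB) (A ∩ B) := by
  refine ⟨qcTree_isQStratII TA TB, ?_⟩
  intro f hf
  -- extract the strategy equations
  have hfact : ∀ k, f (2 * k + 1)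
      = qcSigma TA TB (List.ofFn fun i : Fin (2 * k + 1) => f i.1) := by
    intro k
    have hp := hf (2 * k + 2)
    have hk : 2 * k + 1 < (List.ofFn fun i : Fin (2 * k + 2) => f i.1).length := by
      simp
    have := hp k (by simpa using hk)
    rw [qc_ofFn_getD _ _ (by omega : 2 * k + 1 < 2 * k + 2)] at this
    rw [qc_take_ofFn (by omega) _] at this
    exact this
  have hsigA : ∀ j : ℕ, f (4 * j + 1)
      = qcPick TA (List.ofFn fun i : Fin (2 * j + 1) => qcG 1 f i.1) := by
    intro j
    have h1 := hfact (2 * j)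
    have h2 : 2 * (2 * j) + 1 = 4 * j + 1 := by omega
    rw [h2] at h1
    rw [h1]
    unfold qcSigma
    have hlen : (List.ofFn fun i : Fin (4 * j + 1) => f i.1).length = 4 * j + 1 := by simp
    rw [hlen]
    have hm4 : (4 * j + 1) % 4 = 1 := by omega
    have hd4 : (4 * j + 1) / 4 = j := by omega
    rw [if_pos hm4, hd4, qcSim_ofFn 1 (by norm_num) f j]
  have hsigB : ∀ j : ℕ, f (4 * j + 3)
      = qcPick TB (List.ofFn fun i : Fin (2 * j + 1) => qcG 3 f i.1) := by
    intro j
    have h1 := hfact (2 * j + 1)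
    have h2 : 2 * (2 * j + 1) + 1 = 4 * j + 3 := by omega
    rw [h2] at h1
    rw [h1]
    unfold qcSigma
    have hlen : (List.ofFn fun i : Fin (4 * j + 3) => f i.1).length = 4 * j + 3 := by simp
    rw [hlen]
    have hm4 : ¬ (4 * j + 3) % 4 = 1 := by omega
    have hd4 : (4 * j + 3) / 4 = j := by omega
    rw [if_neg hm4, hd4, qcSim_ofFn 3 (by norm_num) f j]
  constructor
  · exact qcG_plays hA.1 hA.2 hf hsigA (by decide)
  · exact qcG_plays hB.1 hB.2 hf hsigB (by decide)

end QclubAux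

/-- the quasi-club filter is closed under binary intersections. -/
theorem qclub_inter (S : Type u) [Infinite S] (hDC : DCax S)
    (A B : Set (Cw S)) (hA : A ∈ qclub S) (hB : B ∈ qclub S) :
    A ∩ B ∈ qclub S := by
  obtain ⟨TA, hTA⟩ := hA
  obtain ⟨TB, hTB⟩ := hB
  exact ⟨qcTree TA TB, qcTree_wins hTA hTB⟩
end
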